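/- Pointwise variational inequality limit: suppose ρₙ → ρ uniformly with |ρₙ| ≤ 1, ξₙ → ξ weakly in L²(Q), ξₙ = φ(αₙ)·h'(ρₙ) pointwise with h convex nonnegative on [-1,1], φ(αₙ) → 0, and 0 ≤ ∫ φ(αₙ) h(ρₙ) ≤ ∫ φ(αₙ) h(z) + ∫ ξₙ (ρₙ - z) for all measurable z with |z| ≤ 1. Then ∫ ξ·(ρ - z) ≥ 0 for all such z. -/

import Mathlib

/-!
Testing the inequality for `ρₙ` against `z` and dropping the nonnegative left side gives
`∫ ξₙ (ρₙ - z) ≥ -φ(αₙ) ∫ h(z) → 0`. The left side converges to `∫ ξ (ρ - z)`: a weakly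
convergent sequence is bounded in `L²` by the uniform boundedness principle, so its pairing with
the strongly convergent `ρₙ - z` (uniform convergence on a finite measure space) passes to the limit.
-/

open MeasureTheory Filter Topology ENNReal

section Hilbert

variable {𝕜 E ι : Type*} [RCLike 𝕜] [NormedAddCommGroup E] [InnerProductSpace 𝕜 E]
  [CompleteSpace E] {x : ι → E}

theorem exists_norm_le_of_forall_exists_norm_inner_le
    (hx : ∀ y, ∃ C, ∀ i, ‖inner 𝕜 (x i) y‖ ≤ C) : ∃ C, ∀ i, ‖x i‖ ≤ C := by
  obtain ⟨C, hC⟩ := banach_steinhaus (g := fun i => innerSL 𝕜 (x i)) hx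
  exact ⟨C, fun i => (innerSL_apply_norm 𝕜 (x i)).symm.trans_le (hC i)⟩

theorem tendsto_inner_sub_inner_of_tendsto (hx : ∀ y, ∃ C, ∀ i, ‖inner 𝕜 (x i) y‖ ≤ C)
    {l : Filter ι} {y : ι → E} {y₀ : E} (hy : Tendsto y l (𝓝 y₀)) :
    Tendsto (fun i => inner 𝕜 (x i) (y i) - inner 𝕜 (x i) y₀) l (𝓝 0) := by
  obtain ⟨C, hC⟩ := exists_norm_le_of_forall_exists_norm_inner_le hx
  refine squeeze_zero_norm (fun i => ?_)
    (by simpa using (tendsto_iff_norm_sub_tendsto_zero.1 hy).const_mul C)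
  rw [← inner_sub_right]
  exact (norm_inner_le_norm _ _).trans (mul_le_mul_of_nonneg_right (hC i) (norm_nonneg _))

end Hilbert

section L2

variable {α : Type*} [MeasurableSpace α] {μ : Measure α}

theorem MeasureTheory.MemLp.inner_toLp_eq_integral_mul {f g : α → ℝ} (hf : MemLp f 2 μ)
    (hg : MemLp g 2 μ) : inner ℝ (hf.toLp f) (hg.toLp g) = ∫ x, f x * g x ∂μ := by
  rw [L2.inner_def]
  refine integral_congr_ae ?_
  filter_upwards [hf.coeFn_toLp, hg.coeFn_toLp] with x hfx hgx
  simp [hfx, hgx, mul_comm]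

theorem tendsto_eLpNorm_sub_of_tendstoUniformly [IsFiniteMeasure μ] {E ι : Type*}
    [NormedAddCommGroup E] {l : Filter ι} {f : ι → α → E} {g : α → E}
    (hfg : TendstoUniformly f g l) (p : ℝ≥0∞) :
    Tendsto (fun i => eLpNorm (f i - g) p μ) l (𝓝 0) := by
  set c := μ Set.univ ^ p.toReal⁻¹
  have hc : c ≠ ∞ := (ENNReal.rpow_lt_top_of_nonneg (by positivity) (measure_ne_top μ _)).ne
  have hbound : ∀ δ > 0, ∀ᶠ i in l, eLpNorm (f i - g) p μ ≤ c * ENNReal.ofReal δ := by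
    intro δ hδ
    filter_upwards [Metric.tendstoUniformly_iff.1 hfg δ hδ] with i hi
    refine eLpNorm_le_of_ae_bound (ae_of_all _ fun x => ?_)
    simpa [dist_eq_norm'] using (hi x).le
  have hc0 : Tendsto (fun δ : ℝ => c * ENNReal.ofReal δ) (𝓝[>] 0) (𝓝 0) := by
    simpa using ENNReal.Tendsto.const_mul (ENNReal.tendsto_ofReal
      (tendsto_nhdsWithin_of_tendsto_nhds (tendsto_id (x := 𝓝 (0 : ℝ))))) (Or.inr hc)
  refine ENNReal.tendsto_nhds_zero.2 fun ε hε => ?_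
  obtain ⟨δ, hδε, hδ⟩ := ((hc0.eventually (ge_mem_nhds hε)).and self_mem_nhdsWithin).exists
  exact (hbound δ hδ).mono fun i hi => hi.trans hδε

theorem tendsto_integral_mul_of_forall_tendsto_integral_mul {f g : ℕ → α → ℝ} {g₀ : α → ℝ}
    {L : (α → ℝ) → ℝ} (hf : ∀ n, MemLp (f n) 2 μ)
    (hweak : ∀ ψ, MemLp ψ 2 μ → Tendsto (fun n => ∫ x, f n x * ψ x ∂μ) atTop (𝓝 (L ψ)))
    (hg : ∀ n, MemLp (g n) 2 μ) (hg₀ : MemLp g₀ 2 μ)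
    (hgg₀ : Tendsto (fun n => eLpNorm (g n - g₀) 2 μ) atTop (𝓝 0)) :
    Tendsto (fun n => ∫ x, f n x * g n x ∂μ) atTop (𝓝 (L g₀)) := by
  have hbdd : ∀ ψ : Lp ℝ 2 μ, ∃ C, ∀ n, ‖inner ℝ ((hf n).toLp (f n)) ψ‖ ≤ C := fun ψ => by
    obtain ⟨C, hC⟩ := (hweak ψ (Lp.memLp ψ)).norm.bddAbove_range
    refine ⟨C, fun n => ?_⟩
    rw [← Lp.toLp_coeFn ψ (Lp.memLp ψ), MemLp.inner_toLp_eq_integral_mul]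
    exact hC ⟨n, rfl⟩
  have hsmall := tendsto_inner_sub_inner_of_tendsto hbdd
    ((Lp.tendsto_Lp_iff_tendsto_eLpNorm'' g hg g₀ hg₀).2 hgg₀)
  simp only [MemLp.inner_toLp_eq_integral_mul] at hsmall
  simpa using hsmall.add (hweak g₀ hg₀)

end L2

theorem variational_inequality_limit_general
    {Q : Type*} [MeasurableSpace Q] (μ : Measure Q) [IsFiniteMeasure μ]
    (h : ℝ → ℝ)
    (φ : ℕ → ℝ) (hφ : Tendsto φ atTop (nhds 0))
    (ρn : ℕ → Q → ℝ) (ξn : ℕ → Q → ℝ) (ρ ξ : Q → ℝ)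
    (hρn : ∀ n, MemLp (ρn n) 2 μ) (hξn : ∀ n, MemLp (ξn n) 2 μ)
    (hρ : MemLp ρ 2 μ)
    (hρunif : TendstoUniformly ρn ρ atTop)
    (hweak : ∀ ψ : Q → ℝ, MemLp ψ 2 μ →
      Tendsto (fun n => ∫ x, ξn n x * ψ x ∂μ) atTop (nhds (∫ x, ξ x * ψ x ∂μ)))
    (hineq : ∀ n, ∀ z : Q → ℝ, Measurable z → (∀ x, |z x| ≤ 1) →
      0 ≤ ∫ x, φ n * h (ρn n x) ∂μ ∧
      ∫ x, φ n * h (ρn n x) ∂μ ≤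
        ∫ x, φ n * h (z x) ∂μ + ∫ x, ξn n x * (ρn n x - z x) ∂μ) :
    ∀ z : Q → ℝ, Measurable z → (∀ x, |z x| ≤ 1) →
      0 ≤ ∫ x, ξ x * (ρ x - z x) ∂μ := by
  intro z hzm hzb
  have hz : MemLp z 2 μ := MemLp.of_bound hzm.aestronglyMeasurable 1 (ae_of_all _ hzb)
  have hlim : Tendsto (fun n => ∫ x, ξn n x * (ρn n x - z x) ∂μ) atTop
      (𝓝 (∫ x, ξ x * (ρ x - z x) ∂μ)) :=
    tendsto_integral_mul_of_forall_tendsto_integral_mul (g := fun n => ρn n - z) (g₀ := ρ - z)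
      (L := fun ψ => ∫ x, ξ x * ψ x ∂μ) hξn hweak
      (fun n => (hρn n).sub hz) (hρ.sub hz)
      (by simpa only [sub_sub_sub_cancel_right] using
        tendsto_eLpNorm_sub_of_tendstoUniformly (μ := μ) hρunif 2)
  have hlower : ∀ n, -(φ n * ∫ x, h (z x) ∂μ) ≤ ∫ x, ξn n x * (ρn n x - z x) ∂μ := fun n => by
    obtain ⟨hnonneg, hle⟩ := hineq n z hzm hzb
    have hpull : ∫ x, φ n * h (z x) ∂μ = φ n * ∫ x, h (z x) ∂μ := integral_const_mul _ _
    linarith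
  have hlower_lim : Tendsto (fun n => -(φ n * ∫ x, h (z x) ∂μ)) atTop (𝓝 0) := by
    simpa using (hφ.mul_const (∫ x, h (z x) ∂μ)).neg
  exact le_of_tendsto_of_tendsto' hlower_lim hlim hlower

theorem variational_inequality_limit
    {Q : Type*} [MeasurableSpace Q] (μ : Measure Q) [IsFiniteMeasure μ]
    (h : ℝ → ℝ) (hconv : ConvexOn ℝ (Set.Icc (-1 : ℝ) 1) h)
    (hcont : ContinuousOn h (Set.Icc (-1 : ℝ) 1))
    (hnonneg : ∀ r ∈ Set.Icc (-1 : ℝ) 1, 0 ≤ h r)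
    (φ : ℕ → ℝ) (hφpos : ∀ n, 0 < φ n) (hφ : Tendsto φ atTop (nhds 0))
    (ρn : ℕ → Q → ℝ) (ξn : ℕ → Q → ℝ) (ρ ξ : Q → ℝ)
    (hρn : ∀ n, MemLp (ρn n) 2 μ) (hξn : ∀ n, MemLp (ξn n) 2 μ)
    (hρ : MemLp ρ 2 μ) (hξ : MemLp ξ 2 μ)
    (hρbd : ∀ n, ∀ x, |ρn n x| ≤ 1)
    (hρunif : TendstoUniformly ρn ρ atTop)
    (hweak : ∀ ψ : Q → ℝ, MemLp ψ 2 μ →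
      Tendsto (fun n => ∫ x, ξn n x * ψ x ∂μ) atTop (nhds (∫ x, ξ x * ψ x ∂μ)))
    (hineq : ∀ n, ∀ z : Q → ℝ, Measurable z → (∀ x, |z x| ≤ 1) →
      0 ≤ ∫ x, φ n * h (ρn n x) ∂μ ∧
      ∫ x, φ n * h (ρn n x) ∂μ ≤
        ∫ x, φ n * h (z x) ∂μ + ∫ x, ξn n x * (ρn n x - z x) ∂μ) :
    ∀ z : Q → ℝ, Measurable z → (∀ x, |z x| ≤ 1) →
      0 ≤ ∫ x, ξ x * (ρ x - z x) ∂μ :=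
  variational_inequality_limit_general μ h φ hφ ρn ξn ρ ξ hρn hξn hρ hρunif hweak hineq
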